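/- Let t ∈ (0, π/4], let X, Y ∈ ℝⁿ ⊂ ℂⁿ be orthonormal, and set N = cos t · X + sin t · i·Y (a unit vector which is not 𝔄-principal). Let T = {Z ∈ ℂⁿ : g(Z,N) = 0}, 𝒞 = {Z ∈ ℂⁿ : ⟨Z,N⟩ = 0} (complex inner product), and 𝒬 = {Z ∈ ℂⁿ : λ·Z ∈ T and λ·conj(Z) ∈ T for every λ ∈ ℂ with |λ| = 1} (the maximal 𝔄-invariant subspace of T). Then 𝒬 = {Z ∈ ℂⁿ : ⟨Z,X⟩ = 0 and ⟨Z,Y⟩ = 0}; in particular 𝒬 ⊆ 𝒞, and in the 𝔄-isotropic case t = π/4 one has 𝒬 = {Z ∈ 𝒞 : ⟨Z, i·X + Y⟩ = 0}, i.e. 𝒬 is the orthogonal complement in 𝒞 of the complex line ℂ·(i·X + Y). -/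

import Mathlib

/-!
Because `A` is an isometry fixing the real vectors `X` and `Y`, `⟨A Z, N⟩` is the conjugate of
`⟨Z, cos t · X - sin t · i·Y⟩`. Testing `g(λ W, N) = 0` at `λ = 1` and `λ = i` shows that
`λ W ∈ T` for all unit `λ` exactly when `⟨W, N⟩ = 0`, so `Z ∈ 𝒬` means that `Z` is
complex-orthogonal to `cos t · X + sin t · i·Y` and to `cos t · X - sin t · i·Y`, that is, to `X`
and `Y` since `cos t` and `sin t` do not vanish. At `t = π/4`, `N` is a multiple of `X + i·Y`,
and `X + i·Y`, `i·X + Y = i·(X - i·Y)` span the same complex plane as `X`, `Y`.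
-/
noncomputable section

/-- The real inner product `g(X,Y) = Re⟨X,Y⟩` on `ℂⁿ`. -/
def gQ {n : ℕ} (X Y : EuclideanSpace ℂ (Fin n)) : ℝ :=
  (inner ℂ X Y : ℂ).re

/-- The Kähler structure `J` (multiplication by `i`). -/
def JQ {n : ℕ} (X : EuclideanSpace ℂ (Fin n)) : EuclideanSpace ℂ (Fin n) :=
  Complex.I • X

/-- The complex conjugation `A` (coordinatewise conjugation). -/
def AQ {n : ℕ} (X : EuclideanSpace ℂ (Fin n)) : EuclideanSpace ℂ (Fin n) :=
  WithLp.toLp 2 (fun j => (starRingEnd ℂ) (X j))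

/-- The curvature tensor of the complex quadric in the linear model. -/
def Rbar {n : ℕ} (X Y Z : EuclideanSpace ℂ (Fin n)) : EuclideanSpace ℂ (Fin n) :=
  gQ Y Z • X - gQ X Z • Y + gQ (JQ Y) Z • JQ X - gQ (JQ X) Z • JQ Y
    - ((2 : ℝ) * gQ (JQ X) Y) • JQ Z
    + gQ (AQ Y) Z • AQ X - gQ (AQ X) Z • AQ Y
    + gQ (JQ (AQ Y)) Z • JQ (AQ X) - gQ (JQ (AQ X)) Z • JQ (AQ Y)

/-- The Jacobi operator `R_W = R̄(·, W) W`. -/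
def jacobiOp {n : ℕ} (W X : EuclideanSpace ℂ (Fin n)) : EuclideanSpace ℂ (Fin n) :=
  Rbar X W W

open Complex ComplexConjugate

section InnerProductSpace

variable {E : Type*} [NormedAddCommGroup E] [InnerProductSpace ℂ E]

theorem forall_norm_eq_one_re_inner_smul_left_eq_zero_iff (W N : E) :
    (∀ lam : ℂ, ‖lam‖ = 1 → (inner ℂ (lam • W) N).re = 0) ↔ inner ℂ W N = 0 := by
  refine ⟨fun h => Complex.ext ?_ ?_, fun h lam _ => by simp [h]⟩
  · simpa using h 1 (by simp)
  · simpa [inner_smul_left] using h I (by simp)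

theorem inner_real_smul_add_real_smul_I_smul (c s : ℝ) (Z X Y : E) :
    inner ℂ Z (c • X + s • (I • Y)) = c * inner ℂ Z X + s * (I * inner ℂ Z Y) := by
  simp only [inner_add_right, ← Complex.coe_smul, inner_smul_right]

theorem inner_eq_zero_and_inner_I_smul_add_eq_zero_iff {c : ℝ} (hc : c ≠ 0)
    (Z X Y : E) :
    (inner ℂ Z (c • X + c • (I • Y)) = 0 ∧ inner ℂ Z (I • X + Y) = 0) ↔
      (inner ℂ Z X = 0 ∧ inner ℂ Z Y = 0) := by
  rw [inner_real_smul_add_real_smul_I_smul, inner_add_right, inner_smul_right]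
  have hc' : (c : ℂ) ≠ 0 := by exact_mod_cast hc
  constructor
  · rintro ⟨hN, hIXY⟩
    have hX : inner ℂ Z X = 0 := by
      have h : (c : ℂ) * (2 * inner ℂ Z X) = 0 := by
        linear_combination hN - c * I * hIXY + c * inner ℂ Z X * I_sq
      simpa [hc'] using h
    exact ⟨hX, by linear_combination hIXY - I * hX⟩
  · rintro ⟨hX, hY⟩
    simp [hX, hY]

end InnerProductSpace

variable {n : ℕ}

theorem inner_AQ_left_of_im_eq_zero (Z : EuclideanSpace ℂ (Fin n))
    {X : EuclideanSpace ℂ (Fin n)} (hX : ∀ j, (X j).im = 0) :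
    inner ℂ (AQ Z) X = conj (inner ℂ Z X) := by
  simp only [PiLp.inner_apply, RCLike.inner_apply, AQ, map_sum, map_mul, conj_conj]
  exact Finset.sum_congr rfl fun j _ => by rw [conj_eq_iff_im.2 (hX j)]

theorem inner_eq_zero_and_inner_AQ_eq_zero_iff {c s : ℝ} (hc : c ≠ 0) (hs : s ≠ 0)
    {X Y : EuclideanSpace ℂ (Fin n)} (hX : ∀ j, (X j).im = 0) (hY : ∀ j, (Y j).im = 0)
    (Z : EuclideanSpace ℂ (Fin n)) :
    (inner ℂ Z (c • X + s • (I • Y)) = 0 ∧ inner ℂ (AQ Z) (c • X + s • (I • Y)) = 0) ↔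
      (inner ℂ Z X = 0 ∧ inner ℂ Z Y = 0) := by
  simp only [inner_real_smul_add_real_smul_I_smul, inner_AQ_left_of_im_eq_zero Z hX,
    inner_AQ_left_of_im_eq_zero Z hY]
  have hc' : (c : ℂ) ≠ 0 := by exact_mod_cast hc
  have hs' : (s : ℂ) ≠ 0 := by exact_mod_cast hs
  constructor
  · rintro ⟨hN, hAN⟩
    have hAN' := congrArg conj hAN
    simp only [map_add, map_mul, conj_ofReal, Complex.conj_conj, conj_I, map_zero] at hAN'
    have hcX : (c : ℂ) * inner ℂ Z X = 0 := by linear_combination (hN + hAN') / 2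
    have hsY : (s : ℂ) * (I * inner ℂ Z Y) = 0 := by linear_combination (hN - hAN') / 2
    simp only [mul_eq_zero, hc', hs', I_ne_zero, false_or] at hcX hsY
    exact ⟨hcX, hsY⟩
  · rintro ⟨hX, hY⟩
    simp [hX, hY]

theorem maximal_invariant_subspace_not_principal_general
    (n : ℕ) (t : ℝ) (ht : t ∈ Set.Ioc (0 : ℝ) (Real.pi / 4))
    (X Y : EuclideanSpace ℂ (Fin n))
    (hXreal : ∀ j, (X j).im = 0) (hYreal : ∀ j, (Y j).im = 0)
    (N : EuclideanSpace ℂ (Fin n))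
    (hN : N = Real.cos t • X + Real.sin t • (Complex.I • Y))
    (T C Q : Set (EuclideanSpace ℂ (Fin n)))
    (hT : T = {Z | gQ Z N = 0})
    (hC : C = {Z | (inner ℂ Z N : ℂ) = 0})
    (hQ : Q = {Z | ∀ lam : ℂ, ‖lam‖ = 1 →
      lam • Z ∈ T ∧ lam • AQ Z ∈ T}) :
    Q = {Z | (inner ℂ Z X : ℂ) = 0 ∧ (inner ℂ Z Y : ℂ) = 0} ∧
    Q ⊆ C ∧
    (t = Real.pi / 4 →
      Q = {Z | Z ∈ C ∧ (inner ℂ Z (Complex.I • X + Y) : ℂ) = 0}) := by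
  have hc : Real.cos t ≠ 0 := by
    have := Real.pi_pos
    exact (Real.cos_pos_of_mem_Ioo ⟨by linarith [ht.1], by linarith [ht.2]⟩).ne'
  have hs : Real.sin t ≠ 0 := by
    have := Real.pi_pos
    exact (Real.sin_pos_of_pos_of_lt_pi ht.1 (by linarith [ht.2])).ne'
  subst hN hT hC
  have hQ' : Q = {Z | inner ℂ Z X = 0 ∧ inner ℂ Z Y = 0} := by
    ext Z
    simp only [hQ, gQ, Set.mem_ofPred_eq, imp_and, forall_and,
      forall_norm_eq_one_re_inner_smul_left_eq_zero_iff]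
    exact inner_eq_zero_and_inner_AQ_eq_zero_iff hc hs hXreal hYreal Z
  refine ⟨hQ', fun Z hZ => ?_, fun hpi => ?_⟩
  · rw [hQ'] at hZ
    exact ((inner_eq_zero_and_inner_AQ_eq_zero_iff hc hs hXreal hYreal Z).2 hZ).1
  · have hsc : Real.sin t = Real.cos t := by
      rw [hpi, Real.sin_pi_div_four, Real.cos_pi_div_four]
    ext Z
    simp only [hQ', hsc, Set.mem_ofPred_eq]
    exact (inner_eq_zero_and_inner_I_smul_add_eq_zero_iff hc Z X Y).symm

/-- For `t ∈ (0, π/4]`, `X, Y ∈ ℝⁿ` orthonormal and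
`N = cos t · X + sin t · i·Y` (a unit vector which is not `𝔄`-principal), the maximal
`𝔄`-invariant subspace `𝒬` of the tangent space `T = {Z : g(Z,N) = 0}` equals
`{Z : ⟨Z,X⟩ = 0 and ⟨Z,Y⟩ = 0}`; in particular `𝒬 ⊆ 𝒞 = {Z : ⟨Z,N⟩ = 0}`, and when
`t = π/4` one has `𝒬 = {Z ∈ 𝒞 : ⟨Z, i·X + Y⟩ = 0}`. -/
theorem maximal_invariant_subspace_not_principal
    (n : ℕ) (hn : 2 ≤ n) (t : ℝ) (ht : t ∈ Set.Ioc (0 : ℝ) (Real.pi / 4))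
    (X Y : EuclideanSpace ℂ (Fin n))
    (hXreal : ∀ j, (X j).im = 0) (hYreal : ∀ j, (Y j).im = 0)
    (hX : ‖X‖ = 1) (hY : ‖Y‖ = 1) (hXY : (inner ℂ X Y : ℂ) = 0)
    (N : EuclideanSpace ℂ (Fin n))
    (hN : N = Real.cos t • X + Real.sin t • (Complex.I • Y))
    (T C Q : Set (EuclideanSpace ℂ (Fin n)))
    (hT : T = {Z | gQ Z N = 0})
    (hC : C = {Z | (inner ℂ Z N : ℂ) = 0})
    (hQ : Q = {Z | ∀ lam : ℂ, ‖lam‖ = 1 →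
      lam • Z ∈ T ∧ lam • AQ Z ∈ T}) :
    Q = {Z | (inner ℂ Z X : ℂ) = 0 ∧ (inner ℂ Z Y : ℂ) = 0} ∧
    Q ⊆ C ∧
    (t = Real.pi / 4 →
      Q = {Z | Z ∈ C ∧ (inner ℂ Z (Complex.I • X + Y) : ℂ) = 0}) :=
  maximal_invariant_subspace_not_principal_general n t ht X Y hXreal hYreal N hN T C Q hT hC hQ
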